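/- The general compatible Killing tensor of the Calogero–Moser system admits the rotational symmetry V = (y−z, z−x, x−y): with K₁, K₂, K₃, K₄ as given and K = a₁ I₃ + α₁ K₁ + b₃₂ K₂ + c₃ K₃ + γ₃ K₄ for arbitrary real a₁, α₁, b₃₂, c₃, γ₃, the Lie derivative of K along V vanishes identically on ℝ³: Σ_k V^k ∂_k K^{ij} − Σ_k K^{kj} ∂_k V^i − Σ_k K^{ik} ∂_k V^j = 0 for all i, j ∈ {1,2,3}. Moreover V is a rotational Killing vector: writing V(x) = A + x × C with A = 0 and C = (−1, −1, −1)/1, one has ⟨C,C⟩ ≠ 0 and ⟨A,C⟩ = 0. -/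

import Mathlib

/-!
`V` is the linear field `x ↦ A x` of infinitesimal rotations about the axis `u = (1,1,1)`: `A`
is skew and `A u = 0`. Along such a field the Lie derivative obeys the Leibniz rule and kills
the metric, the constant vector `u`, the position vector `x` and `V` itself, hence also `x ⬝ x`,
`u ⬝ x` and every tensor product of these vectors. Each `Kᵢ` is a combination of such tensors:
`K₁ = u ⊗ u - I`, `K₂ = 2 (u ⬝ x) I - (x ⊗ u + u ⊗ x)`, `K₃ = (x ⬝ x) I - x ⊗ x`,
`K₄ = V ⊗ V - K₃`.
-/

open Matrix

/-- 3×3 real matrices. -/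
abbrev M3 := Matrix (Fin 3) (Fin 3) ℝ

/-- Partial derivative `∂_k f` at `x`. -/
noncomputable def pder (k : Fin 3) (f : (Fin 3 → ℝ) → ℝ) (x : Fin 3 → ℝ) : ℝ :=
  fderiv ℝ f x (Pi.single k 1)

/-- The Killing tensor `K₁`. -/
def CM1 : M3 := !![0, 1, 1; 1, 0, 1; 1, 1, 0]

/-- The Killing tensor `K₂`. -/
def CM2 (p : Fin 3 → ℝ) : M3 :=
  !![2 * p 1 + 2 * p 2, -p 0 - p 1, -p 2 - p 0;
     -p 0 - p 1, 2 * p 2 + 2 * p 0, -p 1 - p 2;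
     -p 2 - p 0, -p 1 - p 2, 2 * p 0 + 2 * p 1]

/-- The Killing tensor `K₃`. -/
def CM3 (p : Fin 3 → ℝ) : M3 :=
  !![(p 1) ^ 2 + (p 2) ^ 2, -p 0 * p 1, -p 2 * p 0;
     -p 0 * p 1, (p 2) ^ 2 + (p 0) ^ 2, -p 1 * p 2;
     -p 2 * p 0, -p 1 * p 2, (p 0) ^ 2 + (p 1) ^ 2]

/-- The Killing tensor `K₄`. -/
def CM4 (p : Fin 3 → ℝ) : M3 :=
  !![-2 * p 1 * p 2, (p 0 + p 1 - p 2) * p 2, (p 2 + p 0 - p 1) * p 1;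
     (p 0 + p 1 - p 2) * p 2, -2 * p 2 * p 0, (p 2 + p 1 - p 0) * p 0;
     (p 2 + p 0 - p 1) * p 1, (p 2 + p 1 - p 0) * p 0, -2 * p 0 * p 1]

/-- The linear combination `K = a₁ g + α₁ K₁ + b₃₂ K₂ + c₃ K₃ + γ₃ K₄`. -/
def Kcm (a₁ α₁ b₃₂ c₃ γ₃ : ℝ) (p : Fin 3 → ℝ) : M3 :=
  a₁ • (1 : M3) + α₁ • CM1 + b₃₂ • CM2 p + c₃ • CM3 p + γ₃ • CM4 p

/-- The vector field `V = (y−z, z−x, x−y)`. -/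
def VCM (p : Fin 3 → ℝ) : Fin 3 → ℝ := ![p 1 - p 2, p 2 - p 0, p 0 - p 1]

theorem differentiable_mulVec {m n : Type*} [Fintype n] (A : Matrix m n ℝ) :
    Differentiable ℝ (A *ᵥ ·) :=
  (LinearMap.toContinuousLinearMap (Matrix.mulVecLin A)).differentiable

theorem fderiv_mulVec {m n : Type*} [Fintype n] (A : Matrix m n ℝ) (x v : n → ℝ) :
    fderiv ℝ (A *ᵥ ·) x v = A *ᵥ v := by
  rw [show (A *ᵥ ·) = ⇑(LinearMap.toContinuousLinearMap (Matrix.mulVecLin A)) from rfl,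
    ContinuousLinearMap.fderiv]
  rfl

section LieInvariance

variable {n : ℕ} (A : Matrix (Fin n) (Fin n) ℝ)

/-! Vanishing of the Lie derivative along the linear vector field `x ↦ A x`, whose Jacobian is
`A`: for a 2-tensor field this reads `DK(x)[A x] = A K(x) + K(x) Aᵀ`. Differentiability is
built in so that the Leibniz rules below need no side conditions. -/

def IsInvariantFun (f : (Fin n → ℝ) → ℝ) : Prop :=
  Differentiable ℝ f ∧ ∀ x, fderiv ℝ f x (A *ᵥ x) = 0

def IsInvariantVecField (a : (Fin n → ℝ) → Fin n → ℝ) : Prop :=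
  Differentiable ℝ a ∧ ∀ x, fderiv ℝ a x (A *ᵥ x) = A *ᵥ a x

def IsInvariantTensorField (K : (Fin n → ℝ) → Matrix (Fin n) (Fin n) ℝ) : Prop :=
  (∀ i j, Differentiable ℝ fun y => K y i j) ∧
    ∀ x i j, fderiv ℝ (fun y => K y i j) x (A *ᵥ x) = (A * K x + K x * Aᵀ) i j

variable {A}

theorem IsInvariantFun.const (c : ℝ) : IsInvariantFun A fun _ => c :=
  ⟨differentiable_const c, fun x => by simp⟩

namespace IsInvariantVecField

theorem id : IsInvariantVecField A fun x => x :=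
  ⟨differentiable_id, fun x => by simp⟩

theorem const {u : Fin n → ℝ} (hu : A *ᵥ u = 0) : IsInvariantVecField A fun _ => u :=
  ⟨differentiable_const u, fun x => by simp [hu]⟩

theorem mulVec : IsInvariantVecField A (A *ᵥ ·) :=
  ⟨differentiable_mulVec A, fun x => fderiv_mulVec A x _⟩

theorem differentiable_apply {a : (Fin n → ℝ) → Fin n → ℝ} (ha : IsInvariantVecField A a)
    (i : Fin n) : Differentiable ℝ fun y => a y i :=
  differentiable_pi.1 ha.1 i

theorem fderiv_apply {a : (Fin n → ℝ) → Fin n → ℝ} (ha : IsInvariantVecField A a)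
    (x : Fin n → ℝ) (i : Fin n) : fderiv ℝ (fun y => a y i) x (A *ᵥ x) = (A *ᵥ a x) i := by
  rw [_root_.fderiv_apply (ha.1 x) i, ContinuousLinearMap.comp_apply, ha.2 x]
  rfl

theorem dotProduct (hA : Aᵀ = -A) {a b : (Fin n → ℝ) → Fin n → ℝ}
    (ha : IsInvariantVecField A a) (hb : IsInvariantVecField A b) :
    IsInvariantFun A fun x => a x ⬝ᵥ b x := by
  have hai := ha.differentiable_apply
  have hbi := hb.differentiable_apply
  refine ⟨by unfold _root_.dotProduct; fun_prop, fun x => ?_⟩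
  unfold _root_.dotProduct
  rw [fderiv_fun_sum (u := Finset.univ) (A := fun i y => a y i * b y i)
    (fun i _ => (hai i x).mul (hbi i x))]
  simp only [fderiv_fun_mul (hai _ x) (hbi _ x)]
  simp only [_root_.sum_apply, _root_.add_apply, _root_.smul_apply, ha.fderiv_apply,
    hb.fderiv_apply, smul_eq_mul, Finset.sum_add_distrib]
  change a x ⬝ᵥ (A *ᵥ b x) + b x ⬝ᵥ (A *ᵥ a x) = 0
  rw [dotProduct_mulVec, ← mulVec_transpose, hA, neg_mulVec, neg_dotProduct, dotProduct_comm,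
    neg_add_cancel]

end IsInvariantVecField

namespace IsInvariantTensorField

variable {K L : (Fin n → ℝ) → Matrix (Fin n) (Fin n) ℝ}

theorem one (hA : Aᵀ = -A) : IsInvariantTensorField A fun _ => 1 :=
  ⟨fun i j => differentiable_const _, fun x i j => by simp [hA]⟩

theorem add (hK : IsInvariantTensorField A K) (hL : IsInvariantTensorField A L) :
    IsInvariantTensorField A fun x => K x + L x := by
  refine ⟨fun i j => (hK.1 i j).add (hL.1 i j), fun x i j => ?_⟩
  simp only [Matrix.add_apply]
  rw [fderiv_fun_add (hK.1 i j x) (hL.1 i j x), _root_.add_apply, hK.2, hL.2]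
  simp only [Matrix.mul_add, Matrix.add_mul, Matrix.add_apply]
  ring

theorem sub (hK : IsInvariantTensorField A K) (hL : IsInvariantTensorField A L) :
    IsInvariantTensorField A fun x => K x - L x := by
  refine ⟨fun i j => (hK.1 i j).sub (hL.1 i j), fun x i j => ?_⟩
  simp only [Matrix.sub_apply]
  rw [fderiv_fun_sub (hK.1 i j x) (hL.1 i j x), _root_.sub_apply, hK.2, hL.2]
  simp only [Matrix.mul_sub, Matrix.sub_mul, Matrix.add_apply, Matrix.sub_apply]
  ring

theorem smul {f : (Fin n → ℝ) → ℝ} (hf : IsInvariantFun A f) (hK : IsInvariantTensorField A K) :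
    IsInvariantTensorField A fun x => f x • K x := by
  refine ⟨fun i j => hf.1.mul (hK.1 i j), fun x i j => ?_⟩
  simp only [Matrix.smul_apply, smul_eq_mul]
  rw [fderiv_fun_mul (hf.1 x) (hK.1 i j x)]
  simp only [_root_.add_apply, _root_.smul_apply, hf.2, hK.2,
    Matrix.mul_smul, Matrix.smul_mul, Matrix.add_apply, Matrix.smul_apply, smul_eq_mul]
  ring

theorem const_smul (c : ℝ) (hK : IsInvariantTensorField A K) :
    IsInvariantTensorField A fun x => c • K x :=
  smul (IsInvariantFun.const c) hK

theorem vecMulVec {a b : (Fin n → ℝ) → Fin n → ℝ} (ha : IsInvariantVecField A a)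
    (hb : IsInvariantVecField A b) : IsInvariantTensorField A fun x => vecMulVec (a x) (b x) := by
  refine ⟨fun i j => (ha.differentiable_apply i).mul (hb.differentiable_apply j), fun x i j => ?_⟩
  simp only [vecMulVec_apply]
  rw [fderiv_fun_mul (ha.differentiable_apply i x) (hb.differentiable_apply j x)]
  simp only [_root_.add_apply, _root_.smul_apply, ha.fderiv_apply,
    hb.fderiv_apply, smul_eq_mul]
  rw [mul_vecMulVec, vecMulVec_mul, vecMul_transpose, Matrix.add_apply, vecMulVec_apply,
    vecMulVec_apply]
  ring

end IsInvariantTensorField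

end LieInvariance

theorem sum_mul_pder (v : Fin 3 → ℝ) (f : (Fin 3 → ℝ) → ℝ) (x : Fin 3 → ℝ) :
    ∑ k, v k * pder k f x = fderiv ℝ f x v := by
  conv_rhs => rw [pi_eq_sum_univ' v]
  simp [pder, map_sum]

theorem pder_mulVec_apply (A : Matrix (Fin 3) (Fin 3) ℝ) (k i : Fin 3) (x : Fin 3 → ℝ) :
    pder k (fun y => (A *ᵥ y) i) x = A i k := by
  rw [pder, fderiv_apply ((differentiable_mulVec A) x) i, ContinuousLinearMap.comp_apply,
    fderiv_mulVec, mulVec_single_one]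
  rfl

noncomputable def lieDerivTensor (V : (Fin 3 → ℝ) → Fin 3 → ℝ) (K : (Fin 3 → ℝ) → M3)
    (x : Fin 3 → ℝ) (i j : Fin 3) : ℝ :=
  (∑ k, V x k * pder k (fun y => K y i j) x) - (∑ k, K x k j * pder k (fun y => V y i) x)
    - (∑ k, K x i k * pder k (fun y => V y j) x)

theorem IsInvariantTensorField.lieDerivTensor_eq_zero {A : M3} {K : (Fin 3 → ℝ) → M3}
    (hK : IsInvariantTensorField A K) (x : Fin 3 → ℝ) (i j : Fin 3) :
    lieDerivTensor (A *ᵥ ·) K x i j = 0 := by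
  simp only [lieDerivTensor, pder_mulVec_apply, sum_mul_pder, hK.2, Matrix.add_apply,
    Matrix.mul_apply, transpose_apply, mul_comm _ (A _ _)]
  ring

def rotCM : M3 := !![0, 1, -1; -1, 0, 1; 1, -1, 0]

theorem VCM_eq_mulVec (x : Fin 3 → ℝ) : VCM x = rotCM *ᵥ x := by
  ext i; fin_cases i <;> simp [VCM, rotCM, mulVec, dotProduct, Fin.sum_univ_three] <;> ring

theorem VCM_eq_crossProduct (x : Fin 3 → ℝ) : VCM x = crossProduct ![-1, -1, -1] x := by
  ext i; fin_cases i <;> simp [VCM, cross_apply] <;> ring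

theorem rotCM_transpose : rotCMᵀ = -rotCM := by
  ext i j; fin_cases i <;> fin_cases j <;> simp [rotCM]

theorem rotCM_mulVec_one_one_one : rotCM *ᵥ ![1, 1, 1] = 0 := by
  ext i; fin_cases i <;> simp [rotCM, mulVec, dotProduct, Fin.sum_univ_three]

theorem CM1_eq : CM1 = vecMulVec ![1, 1, 1] ![1, 1, 1] - 1 := by
  ext i j
  rw [Matrix.sub_apply, vecMulVec_apply]
  fin_cases i <;> fin_cases j <;> simp [CM1]

theorem CM2_eq (p : Fin 3 → ℝ) :
    CM2 p = (2 : ℝ) • ((![1, 1, 1] ⬝ᵥ p) • 1) - (vecMulVec p ![1, 1, 1] + vecMulVec ![1, 1, 1] p) := by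
  ext i j
  rw [Matrix.sub_apply, Matrix.add_apply, vecMulVec_apply, vecMulVec_apply]
  fin_cases i <;> fin_cases j <;> simp [CM2, dotProduct, Fin.sum_univ_three] <;> ring

theorem CM3_eq (p : Fin 3 → ℝ) : CM3 p = (p ⬝ᵥ p) • 1 - vecMulVec p p := by
  ext i j
  rw [Matrix.sub_apply, vecMulVec_apply]
  fin_cases i <;> fin_cases j <;> simp [CM3, dotProduct, Fin.sum_univ_three] <;> ring

theorem CM4_eq (p : Fin 3 → ℝ) : CM4 p = vecMulVec (VCM p) (VCM p) - CM3 p := by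
  ext i j
  rw [Matrix.sub_apply, vecMulVec_apply]
  fin_cases i <;> fin_cases j <;> simp [CM3, CM4, VCM] <;> ring

section RotationAboutDiagonal

variable {A : M3}

open IsInvariantTensorField

theorem isInvariantTensorField_CM1 (hA : Aᵀ = -A) (hu : A *ᵥ ![1, 1, 1] = 0) :
    IsInvariantTensorField A fun _ => CM1 := by
  simp only [CM1_eq]
  exact (vecMulVec (.const hu) (.const hu)).sub (one hA)

theorem isInvariantTensorField_CM2 (hA : Aᵀ = -A) (hu : A *ᵥ ![1, 1, 1] = 0) :
    IsInvariantTensorField A CM2 := by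
  have hσ : IsInvariantFun A (![1, 1, 1] ⬝ᵥ ·) := IsInvariantVecField.dotProduct hA (.const hu) .id
  simp only [funext CM2_eq]
  exact ((smul hσ (one hA)).const_smul 2).sub
    ((vecMulVec .id (.const hu)).add (vecMulVec (.const hu) .id))

theorem isInvariantTensorField_CM3 (hA : Aᵀ = -A) : IsInvariantTensorField A CM3 := by
  simp only [funext CM3_eq]
  exact (smul (IsInvariantVecField.dotProduct hA .id .id) (one hA)).sub (vecMulVec .id .id)

end RotationAboutDiagonal

theorem isInvariantTensorField_CM4 : IsInvariantTensorField rotCM CM4 := by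
  have hV : IsInvariantVecField rotCM VCM := funext VCM_eq_mulVec ▸ .mulVec
  simp only [funext CM4_eq]
  exact (IsInvariantTensorField.vecMulVec hV hV).sub (isInvariantTensorField_CM3 rotCM_transpose)

theorem isInvariantTensorField_Kcm (a₁ α₁ b₃₂ c₃ γ₃ : ℝ) :
    IsInvariantTensorField rotCM (Kcm a₁ α₁ b₃₂ c₃ γ₃) := by
  have h1 := isInvariantTensorField_CM1 rotCM_transpose rotCM_mulVec_one_one_one
  have h2 := isInvariantTensorField_CM2 rotCM_transpose rotCM_mulVec_one_one_one
  have h3 := isInvariantTensorField_CM3 rotCM_transpose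
  exact (((((IsInvariantTensorField.one rotCM_transpose).const_smul a₁).add (h1.const_smul α₁)).add
    (h2.const_smul b₃₂)).add (h3.const_smul c₃)).add (isInvariantTensorField_CM4.const_smul γ₃)

/-- STATEMENT 19: the Lie derivative of the general compatible Killing tensor of
the Calogero–Moser system along `V = (y−z, z−x, x−y)` vanishes identically, and
`V` is a rotational Killing vector: `V(x) = A + (−1,−1,−1) × x` (i.e. of the form
`A + x × C` with `A = 0` and `C` the cross-product vector `(−1,−1,−1)`), whose
fundamental invariants satisfy `⟨C,C⟩ ≠ 0` and `⟨A,C⟩ = 0`. -/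
theorem calogero_moser_rotational_symmetry (a₁ α₁ b₃₂ c₃ γ₃ : ℝ) :
    (∀ (x : Fin 3 → ℝ) (i j : Fin 3),
      (∑ k : Fin 3, VCM x k * pder k (fun y => Kcm a₁ α₁ b₃₂ c₃ γ₃ y i j) x)
        - (∑ k : Fin 3, Kcm a₁ α₁ b₃₂ c₃ γ₃ x k j * pder k (fun y => VCM y i) x)
        - (∑ k : Fin 3, Kcm a₁ α₁ b₃₂ c₃ γ₃ x i k * pder k (fun y => VCM y j) x)
        = 0) ∧
    (∀ x : Fin 3 → ℝ,
      VCM x = (0 : Fin 3 → ℝ) + crossProduct ![(-1 : ℝ), -1, -1] x) ∧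
    ![(-1 : ℝ), -1, -1] ⬝ᵥ ![(-1 : ℝ), -1, -1] ≠ 0 ∧
    (0 : Fin 3 → ℝ) ⬝ᵥ ![(-1 : ℝ), -1, -1] = 0 := by
  refine ⟨fun x i j => ?_, fun x => by rw [zero_add, VCM_eq_crossProduct],
    by norm_num [dotProduct, Fin.sum_univ_three, cons_val_two], zero_dotProduct _⟩
  change lieDerivTensor VCM (Kcm a₁ α₁ b₃₂ c₃ γ₃) x i j = 0
  rw [funext VCM_eq_mulVec]
  exact (isInvariantTensorField_Kcm a₁ α₁ b₃₂ c₃ γ₃).lieDerivTensor_eq_zero x i j
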